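/- arXiv:1009.5213 — 3 statements merged into one kernel-verified Lean document; each statement's English description precedes it below -/
import Mathlib

section
/- Consequently, for every Boolean function f : {0,1}ⁿ → {0,1} with f(0) = 0 there exist real angles φ_a, indexed by the 2ⁿ − 1 nonzero strings a ∈ {0,1}ⁿ, such that exp(i · Σ_{a≠0} (a·x mod 2) φ_a) = (−1)^{f(x)} for all x ∈ {0,1}ⁿ. -/
/-!
Write `χ_a(x) = (-1)^(a·x)` for the Walsh characters of `𝔽₂ⁿ`. Since `[a·x] = (1 - χ_a(x)) / 2`,
Fourier inversion `g = 2⁻ⁿ ∑_a ĝ(a) χ_a`, with `ĝ(a) = ∑_y g(y) χ_a(y)`, turns into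
`g(x) - g(0) = -2⁻ⁿ⁺¹ ∑_a ĝ(a) [a·x]`, and the term `a = 0` vanishes. So every real function with
`g(0) = 0` is a real combination of the functions `x ↦ [a·x]`, `a ≠ 0`. Applying this to
`g = π f` gives angles with `exp(i ∑ [a·x] φ_a) = exp(iπ f(x)) = (-1)^f(x)`.
-/

open Finset

lemma ZMod.neg_one_pow_val_add {R : Type*} [Ring R] (u v : ZMod 2) :
    (-1 : R) ^ (u + v).val = (-1) ^ u.val * (-1) ^ v.val := by
  rw [ZMod.val_add, ← neg_one_pow_eq_pow_mod_two, pow_add]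

lemma ZMod.natCast_val_eq_one_sub_neg_one_pow_div_two (u : ZMod 2) :
    (u.val : ℝ) = (1 - (-1) ^ u.val) / 2 := by
  have := u.val_lt
  interval_cases u.val <;> norm_num

section Walsh

variable {ι : Type*} [Fintype ι]

noncomputable def walsh (a x : ι → ZMod 2) : ℝ := (-1) ^ (a ⬝ᵥ x).val

lemma walsh_comm (a x : ι → ZMod 2) : walsh a x = walsh x a := by
  rw [walsh, walsh, dotProduct_comm]

lemma walsh_add_right (a x y : ι → ZMod 2) : walsh a (x + y) = walsh a x * walsh a y := by
  rw [walsh, dotProduct_add, ZMod.neg_one_pow_val_add, walsh, walsh]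

lemma walsh_zero_left (x : ι → ZMod 2) : walsh 0 x = 1 := by
  simp [walsh]

lemma walsh_zero_right (a : ι → ZMod 2) : walsh a 0 = 1 := by
  simp [walsh]

lemma sum_walsh [DecidableEq ι] (z : ι → ZMod 2) :
    ∑ a, walsh a z = if z = 0 then (Fintype.card (ι → ZMod 2) : ℝ) else 0 := by
  split_ifs with hz
  · simp [hz, walsh_comm _ (0 : ι → ZMod 2), walsh_zero_left]
  obtain ⟨j, hj⟩ : ∃ j, z j ≠ 0 := Function.ne_iff.mp hz
  have hzj : z j = 1 := by revert hj; generalize z j = u; revert u; decide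
  -- Translating the summation variable by `e_j` flips the sign of every term.
  have hflip : walsh z (Pi.single j 1) = -1 := by
    simp [walsh, dotProduct_single, hzj, ZMod.val_one]
  have hshift : ∑ a, walsh a z = -∑ a, walsh a z := by
    calc ∑ a, walsh a z = ∑ a, walsh (a + Pi.single j 1) z :=
          (Fintype.sum_equiv (Equiv.addRight (Pi.single j 1)) _ _ fun _ => rfl).symm
      _ = -∑ a, walsh a z := by
          simp_rw [walsh_comm _ z, walsh_add_right, hflip, mul_neg_one, sum_neg_distrib]
  linarith

lemma sum_walsh_mul_walsh [DecidableEq ι] (g : (ι → ZMod 2) → ℝ) (x : ι → ZMod 2) :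
    ∑ a, (∑ y, g y * walsh a y) * walsh a x = Fintype.card (ι → ZMod 2) * g x := by
  have hxy (y : ι → ZMod 2) : y + x = 0 ↔ y = x := by
    rw [add_eq_zero_iff_eq_neg, show -x = x from funext fun i => ZMod.neg_eq_self_mod_two (x i)]
  simp_rw [sum_mul, mul_assoc, ← walsh_add_right]
  rw [sum_comm]
  simp only [← mul_sum, sum_walsh, hxy, mul_ite, mul_zero, sum_ite_eq', mem_univ, if_true]
  ring

end Walsh

lemma exists_sum_val_dotProduct_mul_eq {ι : Type*} [Fintype ι] [DecidableEq ι]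
    (g : (ι → ZMod 2) → ℝ) (hg : g 0 = 0) :
    ∃ φ : (ι → ZMod 2) → ℝ, ∀ x,
      ∑ a ∈ univ.filter (· ≠ 0), ((a ⬝ᵥ x).val : ℝ) * φ a = g x := by
  set N : ℝ := (Fintype.card (ι → ZMod 2) : ℝ)
  have hN : N ≠ 0 := Nat.cast_ne_zero.mpr Fintype.card_ne_zero
  refine ⟨fun a => -2 / N * ∑ y, g y * walsh a y, fun x => ?_⟩
  rw [sum_filter_of_ne (p := (· ≠ 0)) fun a _ h ha => h (by simp [ha])]
  have hinv0 := sum_walsh_mul_walsh g 0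
  simp only [walsh_zero_right, mul_one, hg, mul_zero] at hinv0
  simp_rw [ZMod.natCast_val_eq_one_sub_neg_one_pow_div_two]
  calc ∑ a, (1 - (-1) ^ (a ⬝ᵥ x).val) / 2 * (-2 / N * ∑ y, g y * walsh a y)
      = (∑ a, (∑ y, g y * walsh a y) * walsh a x - ∑ a, ∑ y, g y * walsh a y) / N := by
        rw [← sum_sub_distrib, sum_div]
        refine sum_congr rfl fun a _ => ?_
        rw [walsh]
        field_simp
        ring
    _ = g x := by
        rw [sum_walsh_mul_walsh, hinv0, sub_zero, mul_div_cancel_left₀ _ hN]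

theorem stmt_5 (n : ℕ) (f : (Fin n → ZMod 2) → ZMod 2) (hf : f 0 = 0) :
    ∃ φ : (Fin n → ZMod 2) → ℝ,
      ∀ x : Fin n → ZMod 2,
        Complex.exp (Complex.I *
            (∑ a ∈ Finset.univ.filter (fun a : Fin n → ZMod 2 => a ≠ 0),
              (((∑ j, a j * x j).val : ℝ) : ℂ) * (φ a : ℂ))) =
          (-1 : ℂ) ^ ((f x).val) := by
  obtain ⟨φ, hφ⟩ := exists_sum_val_dotProduct_mul_eq (fun x => Real.pi * (f x).val)
    (by simp [hf])
  refine ⟨φ, fun x => ?_⟩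
  have hsum : ∑ a ∈ univ.filter (fun a : Fin n → ZMod 2 => a ≠ 0),
      (((∑ j, a j * x j).val : ℝ) : ℂ) * (φ a : ℂ) = ((Real.pi * (f x).val : ℝ) : ℂ) := by
    rw [← hφ x]
    push_cast
    rfl
  rw [hsum, ← Complex.exp_pi_mul_I, ← Complex.exp_nat_mul]
  push_cast
  ring_nf
end

section
/- For n ≥ 2, and for any choice of 'local' functions m₁,…,mₙ with each mⱼ : {0,1} → {0,1}, the number of inputs s ∈ {0,1}ⁿ for which ⊕ⱼ mⱼ(sⱼ) = ∏ⱼ sⱼ is at most 2ⁿ − 1; moreover the bound 2ⁿ − 1 is attained (e.g. by all mⱼ constantly 0). -/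
/-!
A sum of local functions `∑ j, m j (s j)` has vanishing mixed second differences in any two
distinct coordinates, whereas the mixed second difference of `∏ j, s j` at the all-ones point is
`1 - 0 - 0 + 0 = 1`. Hence at least one of the four inputs involved is computed wrongly, which
gives the bound `2 ^ n - 1`; the zero strategy fails only at the all-ones input.
-/

open Finset Function

theorem sum_apply_update {ι α G : Type*} [Fintype ι] [DecidableEq ι] [AddCommGroup G]
    (m : ι → α → G) (s : ι → α) (i : ι) (a : α) :
    ∑ j, m j (update s i a j) = ∑ j, m j (s j) + (m i a - m i (s i)) := by
  simp_rw [apply_update m s i a]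
  rw [sum_update_of_mem (mem_univ i), ← add_sum_erase _ _ (mem_univ i),
    sdiff_singleton_eq_erase]
  abel

theorem sum_apply_update_update_sub {ι α G : Type*} [Fintype ι] [DecidableEq ι]
    [AddCommGroup G] (m : ι → α → G) (s : ι → α) {i k : ι} (hik : i ≠ k) (a b : α) :
    ∑ j, m j (update (update s i a) k b j) - ∑ j, m j (update s i a j)
      - ∑ j, m j (update s k b j) + ∑ j, m j (s j) = 0 := by
  rw [sum_apply_update, sum_apply_update, sum_apply_update, update_of_ne hik.symm]
  abel

theorem exists_sum_apply_ne_prod {ι R : Type*} [Fintype ι] [CommRing R] [Nontrivial R]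
    {i k : ι} (hik : i ≠ k) (m : ι → R → R) :
    ∃ s : ι → R, ∑ j, m j (s j) ≠ ∏ j, s j := by
  classical
  by_contra! h
  have prod_update_zero (s : ι → R) (j : ι) : ∏ l, update s j 0 l = 0 :=
    prod_eq_zero (mem_univ j) (update_self j 0 s)
  have key := sum_apply_update_update_sub m 1 hik 0 0
  rw [h, h, h, h, prod_update_zero, prod_update_zero, prod_update_zero] at key
  simp at key

theorem card_filter_le_card_sub_one {α : Type*} [Fintype α] {p : α → Prop}
    [DecidablePred p] (h : ∃ x, ¬ p x) : #(univ.filter p) ≤ Fintype.card α - 1 := by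
  obtain ⟨x, hx⟩ := h
  exact Nat.le_sub_one_of_lt (card_lt_card (filter_ssubset.2 ⟨x, mem_univ x, hx⟩))

theorem ZMod.prod_eq_zero_iff_ne_one {ι : Type*} [Fintype ι] (s : ι → ZMod 2) :
    ∏ j, s j = 0 ↔ s ≠ 1 := by
  rw [prod_eq_zero_iff, Ne, funext_iff]
  push Not
  exact exists_congr fun j => by simpa using (by decide : ∀ x : ZMod 2, x = 0 ↔ x ≠ 1) (s j)

theorem stmt_11 (n : ℕ) (hn : 2 ≤ n) :
    (∀ m : Fin n → ZMod 2 → ZMod 2,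
        (Finset.univ.filter (fun s : Fin n → ZMod 2 =>
          (∑ j, m j (s j)) = ∏ j, s j)).card ≤ 2 ^ n - 1) ∧
      ∃ m : Fin n → ZMod 2 → ZMod 2,
        (Finset.univ.filter (fun s : Fin n → ZMod 2 =>
          (∑ j, m j (s j)) = ∏ j, s j)).card = 2 ^ n - 1 := by
  have hcard : Fintype.card (Fin n → ZMod 2) = 2 ^ n := by simp
  refine ⟨fun m => hcard ▸ card_filter_le_card_sub_one ?_, fun _ _ => 0, ?_⟩
  · have h01 : (⟨0, by omega⟩ : Fin n) ≠ ⟨1, by omega⟩ := by simp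
    simpa using exists_sum_apply_ne_prod h01 m
  · simp_rw [sum_const_zero, eq_comm (a := (0 : ZMod 2)), ZMod.prod_eq_zero_iff_ne_one,
      filter_ne', card_erase_of_mem (mem_univ _), card_univ, hcard]
end

section
/- Let n ≥ 8 and φ₁,…,φₙ ∈ (−π, π). Then |2ⁿ·∏ₖ cos(φₖ/2) − 2·exp(i·Σₖ φₖ/2)| ≤ 2ⁿ − 2. -/
/-!
Write `P = ∏ cos (φₖ / 2)` and `S = ∑ φₖ / 2`. Squaring the norm, the claim becomes
`4 (1 - P cos S) ≤ 2ⁿ (1 - P²)`. Split `1 - P cos S = (1 - P) + P (1 - cos S)`. Subadditivity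
`|sin ∑ x| ≤ ∑ |sin x|` and Cauchy–Schwarz give `1 - cos S ≤ n ∑ (1 - cos (φₖ / 2))`, while
`P ∑ (1 - cos (φₖ / 2)) ≤ 1 - P`; hence `1 - P cos S ≤ (n + 1)(1 - P)`, and `4 (n + 1) ≤ 2ⁿ`.
-/

open Finset

lemma Real.abs_sin_sum_le {ι : Type*} (s : Finset ι) (x : ι → ℝ) :
    |Real.sin (∑ i ∈ s, x i)| ≤ ∑ i ∈ s, |Real.sin (x i)| := by
  induction s using Finset.cons_induction with
  | empty => simp
  | cons a s _ ih =>
    rw [sum_cons, sum_cons, Real.sin_add]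
    calc |Real.sin (x a) * Real.cos (∑ i ∈ s, x i) + Real.cos (x a) * Real.sin (∑ i ∈ s, x i)|
        ≤ |Real.sin (x a)| * |Real.cos (∑ i ∈ s, x i)|
          + |Real.cos (x a)| * |Real.sin (∑ i ∈ s, x i)| := by
          rw [← abs_mul, ← abs_mul]; exact abs_add_le _ _
      _ ≤ |Real.sin (x a)| * 1 + 1 * ∑ i ∈ s, |Real.sin (x i)| := by
          gcongr
          exacts [Real.abs_cos_le_one _, Real.abs_cos_le_one _]
      _ = _ := by ring

lemma Real.one_sub_cos_sum_le {ι : Type*} (s : Finset ι) (x : ι → ℝ) :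
    1 - Real.cos (∑ i ∈ s, x i) ≤ #s * ∑ i ∈ s, (1 - Real.cos (x i)) := by
  have one_sub_cos (y : ℝ) : 1 - Real.cos y = 2 * Real.sin (y / 2) ^ 2 := by
    rw [Real.sin_sq_eq_half_sub, mul_div_cancel₀ _ two_ne_zero]; ring
  simp only [one_sub_cos, ← mul_sum, sum_div]
  have hsin : Real.sin (∑ i ∈ s, x i / 2) ^ 2 ≤ (∑ i ∈ s, |Real.sin (x i / 2)|) ^ 2 := by
    rw [← sq_abs]
    exact pow_le_pow_left₀ (abs_nonneg _) (Real.abs_sin_sum_le s _) 2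
  have hcs := sq_sum_le_card_mul_sum_sq (s := s) (f := fun i ↦ |Real.sin (x i / 2)|)
  simp only [sq_abs] at hcs
  nlinarith

-- `1 - ∏ c = ∑ᵢ (∏_{j < i} c j) (1 - c i)`, and every partial product is at least `∏ c`.
lemma prod_mul_sum_one_sub_le_one_sub_prod {ι R : Type*} [CommRing R] [LinearOrder R]
    [IsStrictOrderedRing R] (s : Finset ι) (c : ι → R) (hc₀ : ∀ i ∈ s, 0 ≤ c i)
    (hc₁ : ∀ i ∈ s, c i ≤ 1) :
    (∏ i ∈ s, c i) * ∑ i ∈ s, (1 - c i) ≤ 1 - ∏ i ∈ s, c i := by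
  induction s using Finset.cons_induction with
  | empty => simp
  | cons a s _ ih =>
    simp only [mem_cons, forall_eq_or_imp] at hc₀ hc₁
    have ih := ih hc₀.2 hc₁.2
    rw [prod_cons, sum_cons]
    have hP₀ : 0 ≤ ∏ i ∈ s, c i := prod_nonneg hc₀.2
    have hP₁ : ∏ i ∈ s, c i ≤ 1 := prod_le_one hc₀.2 hc₁.2
    nlinarith [mul_nonneg hc₀.1 (sub_nonneg.2 hc₁.1), mul_le_mul_of_nonneg_left ih hc₀.1,
      mul_nonneg (mul_nonneg hc₀.1 (sub_nonneg.2 hc₁.1)) (sub_nonneg.2 hP₁)]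

lemma Real.one_sub_prod_cos_mul_cos_sum_le {ι : Type*} (s : Finset ι) (x : ι → ℝ)
    (hx : ∀ i ∈ s, 0 ≤ Real.cos (x i)) :
    1 - (∏ i ∈ s, Real.cos (x i)) * Real.cos (∑ i ∈ s, x i) ≤
      (#s + 1) * (1 - ∏ i ∈ s, Real.cos (x i)) := by
  set P := ∏ i ∈ s, Real.cos (x i)
  have hP₀ : 0 ≤ P := prod_nonneg hx
  have htel := prod_mul_sum_one_sub_le_one_sub_prod s (fun i ↦ Real.cos (x i)) hx
    (fun i _ ↦ Real.cos_le_one _)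
  have hcos := Real.one_sub_cos_sum_le s x
  nlinarith [mul_le_mul_of_nonneg_left hcos hP₀]

lemma Complex.norm_ofReal_sub_mul_exp_sq (a b θ : ℝ) :
    ‖(a : ℂ) - b * Complex.exp (Complex.I * θ)‖ ^ 2 = a ^ 2 + b ^ 2 - 2 * a * b * Real.cos θ := by
  rw [mul_comm Complex.I, Complex.exp_mul_I, ← Complex.ofReal_cos, ← Complex.ofReal_sin,
    Complex.sq_norm, Complex.normSq_apply]
  simp only [Complex.sub_re, Complex.sub_im, Complex.mul_re, Complex.mul_im, Complex.add_re,
    Complex.add_im, Complex.ofReal_re, Complex.ofReal_im, Complex.I_re, Complex.I_im]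
  nlinarith [Real.sin_sq_add_cos_sq θ]

lemma Nat.four_mul_succ_le_two_pow {n : ℕ} (hn : 5 ≤ n) : 4 * (n + 1) ≤ 2 ^ n := by
  induction n, hn using Nat.le_induction with
  | base => norm_num
  | succ m _ ih => rw [pow_succ]; omega

theorem stmt_14 (n : ℕ) (hn : 8 ≤ n) (φ : Fin n → ℝ)
    (hφ : ∀ k, φ k ∈ Set.Ioo (-Real.pi) Real.pi) :
    ‖(2 : ℂ) ^ n * ((∏ k, Real.cos (φ k / 2) : ℝ) : ℂ) -
        2 * Complex.exp (Complex.I * ((∑ k, φ k / 2 : ℝ) : ℂ))‖ ≤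
      2 ^ n - 2 := by
  set P := ∏ k, Real.cos (φ k / 2)
  set S := ∑ k, φ k / 2
  have hcos : ∀ k ∈ univ, 0 ≤ Real.cos (φ k / 2) := fun k _ ↦
    Real.cos_nonneg_of_mem_Icc ⟨by linarith [(hφ k).1], by linarith [(hφ k).2]⟩
  have hP₀ : 0 ≤ P := prod_nonneg hcos
  have hP₁ : P ≤ 1 := prod_le_one hcos fun k _ ↦ Real.cos_le_one _
  have hkey := Real.one_sub_prod_cos_mul_cos_sum_le univ (fun k ↦ φ k / 2) hcos
  rw [card_univ, Fintype.card_fin] at hkey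
  have hpow : 4 * ((n : ℝ) + 1) ≤ 2 ^ n := by
    exact_mod_cast Nat.four_mul_succ_le_two_pow (by omega : 5 ≤ n)
  have hsq := Complex.norm_ofReal_sub_mul_exp_sq (2 ^ n * P) 2 S
  push_cast at hsq
  have hmain : 4 * (1 - P * Real.cos S) ≤ 2 ^ n * (1 - P ^ 2) := calc
    4 * (1 - P * Real.cos S) ≤ 4 * (((n : ℝ) + 1) * (1 - P)) := by gcongr
    _ ≤ 2 ^ n * (1 - P) := by rw [← mul_assoc]; gcongr
    _ ≤ 2 ^ n * (1 - P ^ 2) := by gcongr; nlinarith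
  refine (sq_le_sq₀ (norm_nonneg _) (by linarith)).1 ?_
  rw [hsq]
  nlinarith [mul_le_mul_of_nonneg_left hmain (by positivity : (0 : ℝ) ≤ 2 ^ n)]
end
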